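/- The physicists' Hermite polynomials satisfy the orthogonality relation ∫_ℝ H_n(x) H_m(x) e^{-x^2} dx = n! · 2^n · √π · δ_{mn}. -/

import Mathlib

open Nat Finset Real MeasureTheory

/-- The physicists' Hermite polynomial, via its explicit formula. -/
noncomputable def hermiteR (n : ℕ) (x : ℝ) : ℝ :=
  (n ! : ℝ) * ∑ m ∈ Finset.range (n / 2 + 1),
    (-1) ^ m * (2 * x) ^ (n - 2 * m) / ((m ! : ℝ) * ((n - 2 * m)! : ℝ))

/-! Put `ρₙ(x) = Hₙ(x) e^{-x²}`, with `Hₙ` defined by `H₀ = 1`, `Hₙ₊₁ = 2x Hₙ - Hₙ'`. Then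
`ρₙ' = -ρₙ₊₁`, so integrating by parts `n` times turns `∫ p ρₙ` into `∫ p⁽ⁿ⁾ e^{-x²}` for every
polynomial `p`. Since `Hₙ' = 2n Hₙ₋₁`, the `n`-th derivative of `Hₘ` vanishes for `m < n` and is
the constant `2ⁿ n!` for `m = n`, and `∫ e^{-x²} = √π`. The explicit formula agrees with the
recursive `Hₙ` because both satisfy `Hₙ₊₂ = 2x Hₙ₊₁ - 2(n+1) Hₙ`. -/

open Polynomial

noncomputable def physHermite : ℕ → ℝ[X]
  | 0 => 1
  | n + 1 => C 2 * X * physHermite n - derivative (physHermite n)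

@[simp]
theorem physHermite_zero : physHermite 0 = 1 := rfl

theorem physHermite_succ (n : ℕ) :
    physHermite (n + 1) = C 2 * X * physHermite n - derivative (physHermite n) := rfl

theorem derivative_physHermite_succ (n : ℕ) :
    derivative (physHermite (n + 1)) = C (2 * (n + 1) : ℝ) * physHermite n := by
  induction n with
  | zero => simp [physHermite_succ]
  | succ n ih =>
    rw [physHermite_succ (n + 1), derivative_sub, derivative_mul, derivative_mul, derivative_C,
      derivative_X, ih, derivative_mul, derivative_C, physHermite_succ n]
    simp only [map_mul, map_add, map_natCast, map_ofNat, map_one]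
    push_cast
    ring

theorem physHermite_add_two (n : ℕ) :
    physHermite (n + 2) =
      C 2 * X * physHermite (n + 1) - C (2 * (n + 1) : ℝ) * physHermite n := by
  rw [physHermite_succ (n + 1), derivative_physHermite_succ]

theorem iterate_derivative_physHermite_self (n : ℕ) :
    derivative^[n] (physHermite n) = C ((n ! : ℝ) * 2 ^ n) := by
  induction n with
  | zero => simp
  | succ n ih =>
    rw [Function.iterate_succ_apply, derivative_physHermite_succ, iterate_derivative_C_mul, ih,
      ← C_mul]
    congr 1
    push_cast [factorial_succ]
    ring

theorem iterate_derivative_physHermite_of_lt {m n : ℕ} (h : m < n) :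
    derivative^[n] (physHermite m) = 0 := by
  induction m generalizing n with
  | zero =>
    obtain ⟨n, rfl⟩ := Nat.exists_eq_add_of_lt h
    simp [Function.iterate_succ_apply]
  | succ m ih =>
    obtain ⟨n, rfl⟩ : ∃ k, n = k + 1 := ⟨n - 1, by omega⟩
    rw [Function.iterate_succ_apply, derivative_physHermite_succ, iterate_derivative_C_mul,
      ih (by omega), mul_zero]

theorem hasDerivAt_eval_physHermite_mul_gaussian (n : ℕ) (x : ℝ) :
    HasDerivAt (fun y => eval y (physHermite n) * exp (-y ^ 2))
      (-(eval x (physHermite (n + 1)) * exp (-x ^ 2))) x := by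
  have hg : HasDerivAt (fun y : ℝ => exp (-y ^ 2)) (exp (-x ^ 2) * -(2 * x)) x := by
    simpa using ((hasDerivAt_pow 2 x).fun_neg).exp
  refine (((physHermite n).hasDerivAt x).fun_mul hg).congr_deriv ?_
  simp only [physHermite_succ, eval_sub, eval_mul, eval_C, eval_X]
  ring

theorem integrable_eval_mul_gaussian (p : ℝ[X]) :
    Integrable fun x : ℝ => eval x p * exp (-x ^ 2) := by
  have hpow (i : ℕ) : Integrable fun x : ℝ => x ^ i * exp (-x ^ 2) := by
    simpa [Real.rpow_natCast] using
      integrable_rpow_mul_exp_neg_mul_sq (b := 1) one_pos (s := i)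
        (neg_one_lt_zero.trans_le i.cast_nonneg)
  simp_rw [eval_eq_sum_range, Finset.sum_mul, mul_assoc]
  exact integrable_finsetSum _ fun i _ => (hpow i).const_mul _

theorem integral_eval_mul_physHermite_succ_mul_gaussian (p : ℝ[X]) (n : ℕ) :
    ∫ x, eval x p * (eval x (physHermite (n + 1)) * exp (-x ^ 2)) =
      ∫ x, eval x (derivative p) * (eval x (physHermite n) * exp (-x ^ 2)) := by
  have hint (q : ℝ[X]) (k : ℕ) :
      Integrable fun x => eval x q * (eval x (physHermite k) * exp (-x ^ 2)) := by
    simpa only [eval_mul, mul_assoc] using integrable_eval_mul_gaussian (q * physHermite k)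
  have := integral_mul_deriv_eq_deriv_mul_of_integrable
    (fun x _ => p.hasDerivAt x) (fun x _ => hasDerivAt_eval_physHermite_mul_gaussian n x)
    (by simpa only [Pi.mul_def, Pi.neg_def, mul_neg] using (hint p (n + 1)).neg)
    (hint (derivative p) n) (hint p n)
  simpa only [mul_neg, integral_neg, neg_inj] using this

theorem integral_eval_mul_physHermite_mul_gaussian (p : ℝ[X]) (n : ℕ) :
    ∫ x, eval x p * (eval x (physHermite n) * exp (-x ^ 2)) =
      ∫ x, eval x (derivative^[n] p) * exp (-x ^ 2) := by
  induction n generalizing p with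
  | zero => simp
  | succ n ih =>
    rw [integral_eval_mul_physHermite_succ_mul_gaussian, ih, Function.iterate_succ_apply]

theorem integral_physHermite_mul_physHermite_of_lt {m n : ℕ} (h : m < n) :
    ∫ x, eval x (physHermite m) * eval x (physHermite n) * exp (-x ^ 2) = 0 := by
  simp_rw [mul_assoc, integral_eval_mul_physHermite_mul_gaussian,
    iterate_derivative_physHermite_of_lt h, eval_zero, zero_mul, integral_zero]

theorem integral_physHermite_sq_mul_gaussian (n : ℕ) :
    ∫ x, eval x (physHermite n) * eval x (physHermite n) * exp (-x ^ 2) =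
      n ! * 2 ^ n * √π := by
  simp_rw [mul_assoc, integral_eval_mul_physHermite_mul_gaussian,
    iterate_derivative_physHermite_self, eval_C, integral_const_mul]
  rw [show ∫ x : ℝ, exp (-x ^ 2) = √π by simpa using integral_gaussian 1, mul_assoc]

/-- `n.descFactorial (2 * m) = n! / (n - 2m)!` vanishes when `n < 2m`, so sums of these terms
may run over any range beyond `n / 2`. -/
noncomputable def hermiteTerm (n m : ℕ) (x : ℝ) : ℝ :=
  (-1) ^ m * (n.descFactorial (2 * m) / m ! : ℝ) * (2 * x) ^ (n - 2 * m)

theorem hermiteR_eq_sum_hermiteTerm {n K : ℕ} (hK : n / 2 < K) (x : ℝ) :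
    hermiteR n x = ∑ m ∈ range K, hermiteTerm n m x := by
  have hsub : range (n / 2 + 1) ⊆ range K := range_subset_range.2 hK
  rw [hermiteR, mul_sum, ← sum_subset hsub]
  · refine sum_congr rfl fun m hm => ?_
    have h2m : 2 * m ≤ n := by rw [mem_range] at hm; omega
    rw [hermiteTerm, ← factorial_mul_descFactorial h2m]
    push_cast
    field_simp
  · intro m _ hm
    have : n < 2 * m := by rw [mem_range] at hm; omega
    simp [hermiteTerm, descFactorial_of_lt this]

theorem hermiteTerm_add_two_succ (n m : ℕ) (x : ℝ) :
    hermiteTerm (n + 2) (m + 1) x =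
      2 * x * hermiteTerm (n + 1) (m + 1) x - 2 * (n + 1) * hermiteTerm n m x := by
  have e1 :
      (n + 2).descFactorial (2 * (m + 1)) = (n + 2) * ((n + 1) * n.descFactorial (2 * m)) := by
    rw [mul_add_one, succ_descFactorial_succ, succ_descFactorial_succ]
  have e2 :
      (n + 1).descFactorial (2 * (m + 1)) = (n + 1) * ((n - 2 * m) * n.descFactorial (2 * m)) := by
    rw [mul_add_one, succ_descFactorial_succ, descFactorial_succ]
  rw [hermiteTerm, hermiteTerm, hermiteTerm, e1, e2,
    show n + 2 - 2 * (m + 1) = n - 2 * m by omega, factorial_succ]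
  rcases lt_or_ge (2 * m) n with h | h
  · obtain ⟨k, rfl⟩ := Nat.exists_eq_add_of_lt h
    rw [show 2 * m + k + 1 - 2 * m = k + 1 by omega,
      show 2 * m + k + 1 + 1 - 2 * (m + 1) = k by omega, pow_succ]
    push_cast
    field_simp
    ring
  · rcases h.eq_or_lt with h | h
    · subst h
      rw [Nat.sub_self, zero_mul, mul_zero]
      push_cast
      field_simp
      ring
    · simp [descFactorial_of_lt h]

theorem hermiteR_add_two (n : ℕ) (x : ℝ) :
    hermiteR (n + 2) x = 2 * x * hermiteR (n + 1) x - 2 * (n + 1) * hermiteR n x := by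
  rw [hermiteR_eq_sum_hermiteTerm (K := n / 2 + 2) (by omega),
    hermiteR_eq_sum_hermiteTerm (n := n + 1) (K := n / 2 + 2) (by omega),
    hermiteR_eq_sum_hermiteTerm (K := n / 2 + 1) (by omega),
    sum_range_succ' (hermiteTerm (n + 2) · x), sum_range_succ' (hermiteTerm (n + 1) · x),
    mul_add, mul_sum, mul_sum, add_sub_right_comm, ← sum_sub_distrib]
  have h0 : hermiteTerm (n + 2) 0 x = 2 * x * hermiteTerm (n + 1) 0 x := by
    simp only [hermiteTerm, mul_zero, descFactorial_zero, Nat.sub_zero, pow_succ]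
    ring
  simp only [hermiteTerm_add_two_succ, sum_sub_distrib, ← mul_sum, h0]

theorem hermiteR_eq_eval_physHermite (n : ℕ) (x : ℝ) :
    hermiteR n x = eval x (physHermite n) := by
  induction n using Nat.twoStepInduction with
  | zero => simp [hermiteR]
  | one => simp [hermiteR, physHermite_succ]
  | more n ih ih' =>
    rw [hermiteR_add_two, ih, ih', physHermite_add_two]
    simp

theorem stmt_6 (n m : ℕ) :
    ∫ x : ℝ, hermiteR n x * hermiteR m x * Real.exp (-x ^ 2) =
      if n = m then (n ! : ℝ) * 2 ^ n * Real.sqrt π else 0 := by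
  simp_rw [hermiteR_eq_eval_physHermite]
  split_ifs with h
  · subst h
    exact integral_physHermite_sq_mul_gaussian n
  rcases lt_or_gt_of_ne h with h | h
  · exact integral_physHermite_mul_physHermite_of_lt h
  · simpa only [mul_comm (eval _ (physHermite m))] using
      integral_physHermite_mul_physHermite_of_lt h
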